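/- Let E be a real vector space, V ⊆ E a set, C the convex cone generated by V, and f : E → ℝ a linear functional with f(v) ≥ 0 for all v ∈ V. Let F be the convex cone generated by {v ∈ V : f(v) = 0}. Then F = C ∩ ker f, and F is an extreme subset of C (a face of C). Moreover, if f(v) > 0 for every nonzero v ∈ V, then C is salient. -/

import Mathlib

/-!
Since `f ≥ 0` on `V`, `f ≥ 0` on the cone `C` generated by `V`, so `C ∩ ker f` is a face of `C`:
if `f` kills a positive combination of two points of `C`, it kills each of them. Writing a point
of `C ∩ ker f` as a nonnegative combination of elements of `V`, every summand therefore lies in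
`ker f`, so it is a multiple of an element of `V ∩ ker f`; this identifies `C ∩ ker f` with the
cone generated by `V ∩ ker f`. If `f` is positive on `V ∖ {0}`, that cone is `{0}`, while
`x, -x ∈ C` forces `f x = 0`.
-/

open scoped BigOperators

/-- The convex cone generated by a set `V`: all finite nonnegative linear combinations
of elements of `V`. -/
def coneGen {E : Type*} [AddCommGroup E] [Module ℝ E] (V : Set E) : Set E :=
  {x | ∃ (n : ℕ) (c : Fin n → ℝ) (v : Fin n → E),
    (∀ i, 0 ≤ c i) ∧ (∀ i, v i ∈ V) ∧ x = ∑ i, c i • v i}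

/-- A cone `C` is salient if `x ∈ C` and `-x ∈ C` imply `x = 0`. -/
def SalientCone {E : Type*} [AddCommGroup E] [Module ℝ E] (C : Set E) : Prop :=
  ∀ x ∈ C, -x ∈ C → x = 0

namespace PointedCone

variable {𝕜 E : Type*} [Field 𝕜] [LinearOrder 𝕜] [IsStrictOrderedRing 𝕜]
  [AddCommGroup E] [Module 𝕜 E] {V : Set E} {f : E →ₗ[𝕜] 𝕜}

theorem nonneg_of_mem_hull (hf : ∀ v ∈ V, 0 ≤ f v) {x : E} (hx : x ∈ hull 𝕜 V) : 0 ≤ f x :=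
  Submodule.span_induction hf (by simp) (fun _ _ _ _ hx hy => by simpa using add_nonneg hx hy)
    (fun c _ _ hx => by rw [← Nonneg.coe_smul, map_smul]; exact mul_nonneg c.2 hx) hx

theorem isFaceOf_inf_ker {C : PointedCone 𝕜 E} (hf : ∀ x ∈ C, 0 ≤ f x) :
    (C ⊓ ofSubmodule (LinearMap.ker f)).IsFaceOf C where
  le := inf_le_left
  mem_of_smul_add_mem {x y a} hx hy ha hxy := by
    have hsum : a * f x + f y = 0 := by simpa using hxy.2
    have hfx : a * f x = 0 :=
      ((add_eq_zero_iff_of_nonneg (mul_nonneg ha.le (hf x hx)) (hf y hy)).1 hsum).1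
    exact ⟨hx, by simpa [ha.ne'] using hfx⟩

theorem hull_sep_eq_inf_ker (hf : ∀ v ∈ V, 0 ≤ f v) :
    hull 𝕜 {v ∈ V | f v = 0} = hull 𝕜 V ⊓ ofSubmodule (LinearMap.ker f) := by
  refine le_antisymm (Submodule.span_le.2 fun v hv => ⟨subset_hull hv.1, hv.2⟩) fun x hx => ?_
  obtain ⟨n, c, v, rfl⟩ := Submodule.mem_span_set'.1 hx.1
  have hface := isFaceOf_inf_ker fun _ => nonneg_of_mem_hull hf
  refine Submodule.sum_mem _ fun i _ => ?_
  have hi : f (c i • (v i : E)) = 0 :=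
    (hface.mem_of_sum_mem (fun j => Submodule.smul_mem _ _ (subset_hull (v j).2)) hx i).2
  rcases (by simpa using hi : c i = 0 ∨ f (v i) = 0) with hc | hv
  · simp [hc]
  · exact Submodule.smul_mem _ _ (subset_hull ⟨(v i).2, hv⟩)

theorem eq_zero_of_mem_hull_of_neg_mem (hf : ∀ v ∈ V, v ≠ 0 → 0 < f v) {x : E}
    (hx : x ∈ hull 𝕜 V) (hnx : -x ∈ hull 𝕜 V) : x = 0 := by
  have hf' : ∀ v ∈ V, 0 ≤ f v := fun v hv => by
    rcases eq_or_ne v 0 with rfl | hv0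
    · simp
    · exact (hf v hv hv0).le
  have hx0 : f x = 0 :=
    le_antisymm (by simpa using nonneg_of_mem_hull hf' hnx) (nonneg_of_mem_hull hf' hx)
  have hxS : x ∈ hull 𝕜 {v ∈ V | f v = 0} := by
    rw [hull_sep_eq_inf_ker hf']
    exact ⟨hx, hx0⟩
  have hS : {v ∈ V | f v = 0} ⊆ {0} := fun v ⟨hv, hv0⟩ =>
    by_contra fun hne => (hf v hv hne).ne' hv0
  simpa using Submodule.span_mono hS hxS

end PointedCone

theorem coneGen_eq_hull {E : Type*} [AddCommGroup E] [Module ℝ E] (V : Set E) :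
    coneGen V = PointedCone.hull ℝ V := by
  ext x
  constructor
  · rintro ⟨n, c, v, hc, hv, rfl⟩
    exact Submodule.sum_mem _ fun i _ =>
      Submodule.smul_mem _ (⟨c i, hc i⟩ : {c : ℝ // 0 ≤ c}) (PointedCone.subset_hull (hv i))
  · intro hx
    obtain ⟨n, c, v, rfl⟩ := Submodule.mem_span_set'.1 hx
    exact ⟨n, fun i => c i, fun i => v i, fun i => (c i).2, fun i => (v i).2, rfl⟩

/-- Supporting hyperplane construction: if `f` is a linear functional nonnegative on the
generating set `V` of a cone `C`, then the cone `F` generated by `{v ∈ V : f v = 0}`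
equals `C ∩ ker f` and is an extreme subset (face) of `C`; moreover if `f` is strictly
positive on the nonzero elements of `V`, then `C` is salient. -/
theorem supporting_functional_face {E : Type*} [AddCommGroup E] [Module ℝ E]
    (V : Set E) (f : E →ₗ[ℝ] ℝ) (hf : ∀ v ∈ V, 0 ≤ f v) :
    coneGen {v ∈ V | f v = 0} = coneGen V ∩ (LinearMap.ker f : Set E) ∧
    IsExtreme ℝ (coneGen V) (coneGen {v ∈ V | f v = 0}) ∧
    ((∀ v ∈ V, v ≠ 0 → 0 < f v) → SalientCone (coneGen V)) := by
  have hsep := PointedCone.hull_sep_eq_inf_ker hf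
  simp only [SalientCone, coneGen_eq_hull]
  refine ⟨congrArg SetLike.coe hsep, ?_,
    fun hpos _ => PointedCone.eq_zero_of_mem_hull_of_neg_mem hpos⟩
  rw [hsep]
  exact (PointedCone.isFaceOf_inf_ker fun _ => PointedCone.nonneg_of_mem_hull hf).isExtreme
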